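/- Let ν > 0, ε > 0, 0 < T < ∞, let E : ℝ^d → ℝ be continuously differentiable, and let u ∈ C²([0,T]; ℝ^d) satisfy the Euler–Lagrange equation −εν u''(t) + ν u'(t) + ∇E(u(t)) = 0 for all t ∈ [0,T] together with the final condition u'(T) = 0. Then (εν/2)|u'(0)|² + ν ∫_0^T |u'(t)|² dt + E(u(T)) = E(u(0)). -/

import Mathlib

/-!
Along a solution the energy `(εν/2)|u'|² - E(u)` has derivative
`⟪εν u'' - ∇E(u), u'⟫ = ν|u'|²`, because the Euler–Lagrange equation says
`εν u'' - ∇E(u) = ν u'`. Integrating over `[0,T]` and using `u'(T) = 0` gives the identity.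
-/

open Set RealInnerProductSpace

theorem intervalIntegral.integral_eq_sub_of_hasDerivWithinAt_Icc {G : Type*}
    [NormedAddCommGroup G] [NormedSpace ℝ G] [CompleteSpace G] {f f' : ℝ → G} {a b : ℝ}
    (hab : a ≤ b) (hf : ∀ t ∈ Icc a b, HasDerivWithinAt f (f' t) (Icc a b) t)
    (hf' : IntervalIntegrable f' MeasureTheory.volume a b) :
    ∫ t in a..b, f' t = f b - f a :=
  integral_eq_sub_of_hasDeriv_right_of_le hab (fun t ht => (hf t ht).continuousWithinAt)
    (fun t ht => (hf t (Ioo_subset_Icc_self ht)).mono_of_mem_nhdsWithin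
      (Icc_mem_nhdsGT_of_mem ⟨ht.1.le, ht.2⟩))
    hf'

section Energy

variable {F : Type*} [NormedAddCommGroup F] [InnerProductSpace ℝ F] [CompleteSpace F]
  {E : F → ℝ} {u v : ℝ → F} {v' : F} {s : Set ℝ} {t : ℝ}

theorem hasDerivWithinAt_half_mul_norm_sq_sub_comp (c : ℝ)
    (hu : HasDerivWithinAt u (v t) s t) (hv : HasDerivWithinAt v v' s t)
    (hE : DifferentiableAt ℝ E (u t)) :
    HasDerivWithinAt (fun r => c / 2 * ‖v r‖ ^ 2 - E (u r))
      ⟪c • v' - gradient E (u t), v t⟫ s t := by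
  have hEu : HasDerivWithinAt (fun r => E (u r)) ⟪gradient E (u t), v t⟫ s t :=
    hE.hasGradientAt.hasFDerivAt.comp_hasDerivWithinAt t hu
  refine ((hv.norm_sq.const_mul (c / 2)).sub hEu).congr_deriv ?_
  rw [inner_sub_left, real_inner_smul_left, real_inner_comm]
  ring

theorem hasDerivWithinAt_energy_of_eulerLagrange {c ν : ℝ}
    (hu : HasDerivWithinAt u (v t) s t) (hv : HasDerivWithinAt v v' s t)
    (hE : DifferentiableAt ℝ E (u t)) (hode : (-c) • v' + ν • v t + gradient E (u t) = 0) :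
    HasDerivWithinAt (fun r => c / 2 * ‖v r‖ ^ 2 - E (u r)) (ν * ‖v t‖ ^ 2) s t := by
  have hdissip : c • v' - gradient E (u t) = ν • v t := by
    linear_combination (norm := module) -hode
  refine (hasDerivWithinAt_half_mul_norm_sq_sub_comp c hu hv hE).congr_deriv ?_
  rw [hdissip, real_inner_smul_left, real_inner_self_eq_norm_sq]

end Energy

theorem wide_inner_variation_estimate (d : ℕ) (ν ε T : ℝ)
    (hT : 0 < T)
    (E : EuclideanSpace ℝ (Fin d) → ℝ) (hE : ContDiff ℝ 1 E)
    (u u' u'' : ℝ → EuclideanSpace ℝ (Fin d))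
    (hu1 : ∀ t ∈ Set.Icc (0 : ℝ) T, HasDerivWithinAt u (u' t) (Set.Icc 0 T) t)
    (hu2 : ∀ t ∈ Set.Icc (0 : ℝ) T, HasDerivWithinAt u' (u'' t) (Set.Icc 0 T) t)
    (hode : ∀ t ∈ Set.Icc (0 : ℝ) T,
      (-(ε * ν)) • u'' t + ν • u' t + gradient E (u t) = 0)
    (hfin : u' T = 0) :
    (ε * ν / 2) * ‖u' 0‖ ^ 2 + ν * (∫ t in (0 : ℝ)..T, ‖u' t‖ ^ 2) + E (u T) = E (u 0) := by
  have hEdiff : Differentiable ℝ E := hE.differentiable one_ne_zero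
  have hu'cont : ContinuousOn u' (Icc 0 T) := fun t ht => (hu2 t ht).continuousWithinAt
  have hbalance := intervalIntegral.integral_eq_sub_of_hasDerivWithinAt_Icc hT.le
    (fun t ht =>
      hasDerivWithinAt_energy_of_eulerLagrange (hu1 t ht) (hu2 t ht) (hEdiff _) (hode t ht))
    ((continuousOn_const.mul (hu'cont.norm.pow 2)).intervalIntegrable_of_Icc hT.le)
  rw [intervalIntegral.integral_const_mul, hfin, norm_zero] at hbalance
  linarith
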